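/- Cross-ratio expression of the coordinates a_i and b_i (Theorem 3.8, first part): let R be a division ring and u, w : ℤ → R² sequences of column vectors and a, b : ℤ → R scalars such that for every i: u_i = w_{i+1} + w_i·a_i and u_{i+1} = w_{i+1} − w_i·b_i (componentwise, scalars acting on the right). Assume every element inverted in the cross-ratio formulas below is nonzero. Then for every i: κ(w_{i−1}, w_{i+1}, w_i, u_i) = a_i, and κ(u_i, u_{i+1}, w_i, w_{i+1}) · κ(w_{i−1}, w_{i+1}, w_i, u_i) = −b_i. -/
import Mathlib


/-- The non-commutative cross-ratio `κ(x, y, z, t)` of four column vectors in `R²`: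
`κ(x,y,z,t) = (z₁ − y₁y₂⁻¹z₂)⁻¹ (t₁ − y₁y₂⁻¹t₂) (t₁ − x₁x₂⁻¹t₂)⁻¹ (z₁ − x₁x₂⁻¹z₂)`. -/
noncomputable def ncr {R : Type*} [DivisionRing R] (x y z t : Fin 2 → R) : R :=
  (z 0 - y 0 * (y 1)⁻¹ * z 1)⁻¹ * (t 0 - y 0 * (y 1)⁻¹ * t 1) *
    (t 0 - x 0 * (x 1)⁻¹ * t 1)⁻¹ * (z 0 - x 0 * (x 1)⁻¹ * z 1)

/-- `κ(x, y, z, t)` is said to be defined when `x₂`, `y₂`, `z₁ − y₁y₂⁻¹z₂` and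
`t₁ − x₁x₂⁻¹t₂` are all nonzero. -/
def ncrDefined {R : Type*} [DivisionRing R] (x y z t : Fin 2 → R) : Prop :=
  x 1 ≠ 0 ∧ y 1 ≠ 0 ∧ z 0 - y 0 * (y 1)⁻¹ * z 1 ≠ 0 ∧ t 0 - x 0 * (x 1)⁻¹ * t 1 ≠ 0

/-- Cross-ratio expression of the coordinates `a_i` and `b_i`: if
`u_i = w_{i+1} + w_i·a_i` and `u_{i+1} = w_{i+1} − w_i·b_i`, then
`κ(w_{i−1}, w_{i+1}, w_i, u_i) = a_i` and
`κ(u_i, u_{i+1}, w_i, w_{i+1}) · κ(w_{i−1}, w_{i+1}, w_i, u_i) = −b_i`. -/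
theorem stmt_10 {R : Type*} [DivisionRing R]
    (u w : ℤ → Fin 2 → R) (a b : ℤ → R)
    (h1 : ∀ (i : ℤ) (r : Fin 2), u i r = w (i + 1) r + w i r * a i)
    (h2 : ∀ (i : ℤ) (r : Fin 2), u (i + 1) r = w (i + 1) r - w i r * b i)
    (hdef1 : ∀ i : ℤ, ncrDefined (w (i - 1)) (w (i + 1)) (w i) (u i))
    (hdef2 : ∀ i : ℤ, ncrDefined (u i) (u (i + 1)) (w i) (w (i + 1))) :
    ∀ i : ℤ,
      ncr (w (i - 1)) (w (i + 1)) (w i) (u i) = a i ∧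
        ncr (u i) (u (i + 1)) (w i) (w (i + 1)) * ncr (w (i - 1)) (w (i + 1)) (w i) (u i)
          = -b i := by
  intro i
  obtain ⟨hx1, hy1, hA, hC⟩ := hdef1 i
  obtain ⟨hU1, hU'1, hA2, hC2⟩ := hdef2 i
  -- relation from h2 at i-1 : u i = w i - w (i-1) * b (i-1)
  have hm1 : ∀ r : Fin 2, u i r = w i r - w (i - 1) r * b (i - 1) := by
    intro r
    have hi : i - 1 + 1 = i := by omega
    have := h2 (i - 1) r
    rwa [hi] at this
  -- abbreviations
  set k := w (i + 1) 0 * (w (i + 1) 1)⁻¹ with hkdef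
  set p := w (i - 1) 0 * (w (i - 1) 1)⁻¹ with hpdef
  set q := u (i + 1) 0 * (u (i + 1) 1)⁻¹ with hqdef
  set r := u i 0 * (u i 1)⁻¹ with hrdef
  have hk : k * w (i + 1) 1 = w (i + 1) 0 := by
    rw [hkdef, mul_assoc, inv_mul_cancel₀ hy1, mul_one]
  have hp : p * w (i - 1) 1 = w (i - 1) 0 := by
    rw [hpdef, mul_assoc, inv_mul_cancel₀ hx1, mul_one]
  have hq : q * u (i + 1) 1 = u (i + 1) 0 := by
    rw [hqdef, mul_assoc, inv_mul_cancel₀ hU'1, mul_one]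
  have hr : r * u i 1 = u i 0 := by
    rw [hrdef, mul_assoc, inv_mul_cancel₀ hU1, mul_one]
  -- part 1 computations
  have hB : u i 0 - k * u i 1 = (w i 0 - k * w i 1) * a i := by
    rw [h1 i 0, h1 i 1, mul_add, ← mul_assoc, hk]
    noncomm_ring
  have hCD : u i 0 - p * u i 1 = w i 0 - p * w i 1 := by
    rw [hm1 0, hm1 1, mul_sub, ← mul_assoc, hp]
    noncomm_ring
  have hD : w i 0 - p * w i 1 ≠ 0 := by rwa [hCD] at hC
  have part1 : ncr (w (i - 1)) (w (i + 1)) (w i) (u i) = a i := by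
    rw [ncr, ← hkdef, ← hpdef, hB, hCD, inv_mul_cancel_left₀ hA, mul_assoc,
      inv_mul_cancel₀ hD, mul_one]
  refine ⟨part1, ?_⟩
  -- part 2 computations
  have hwrel : ∀ s : Fin 2, w (i + 1) s = u (i + 1) s + w i s * b i := by
    intro s; rw [h2 i s]; noncomm_ring
  have hB2 : w (i + 1) 0 - q * w (i + 1) 1 = (w i 0 - q * w i 1) * b i := by
    rw [hwrel 0, hwrel 1, mul_add, ← mul_assoc, hq]
    noncomm_ring
  have hwrel' : ∀ s : Fin 2, w (i + 1) s = u i s - w i s * a i := by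
    intro s; rw [h1 i s]; noncomm_ring
  have hC2' : w (i + 1) 0 - r * w (i + 1) 1 = -((w i 0 - r * w i 1) * a i) := by
    rw [hwrel' 0, hwrel' 1, mul_sub, ← mul_assoc, hr]
    noncomm_ring
  have hDa : (w i 0 - r * w i 1) * a i ≠ 0 := by
    intro h; apply hC2; rw [hC2', h, neg_zero]
  have hD2 : w i 0 - r * w i 1 ≠ 0 := left_ne_zero_of_mul hDa
  have ha : a i ≠ 0 := right_ne_zero_of_mul hDa
  have part2 : ncr (u i) (u (i + 1)) (w i) (w (i + 1)) = -(b i * (a i)⁻¹) := by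
    rw [ncr, ← hqdef, ← hrdef, hB2, hC2', inv_mul_cancel_left₀ hA2, inv_neg,
      mul_inv_rev, mul_neg, neg_mul, mul_assoc, mul_assoc, inv_mul_cancel₀ hD2, mul_one]
  rw [part1, part2, neg_mul, mul_assoc, inv_mul_cancel₀ ha, mul_one]
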